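/- arXiv:1804.10612 — 2 statements merged into one kernel-verified Lean document; each statement's English description precedes it below -/
import Mathlib

section
/- Let {F_{a|ω_x}} be Hermitian teleportation-witness operators on H_B and let w = Σ_{a,x} tr[F_{a|ω_x} σ_{a|ω_x}] be its value on a teleportation assemblage arising from a shared state ρ^{AB}, a POVM {M_a^{VA}} and input states {ω_x}. Define f(w) as the optimal value of: minimize tr[ρ_−] over positive semidefinite operators M*_{a,±} on V ⊗ H_B and Hermitian operators ρ_± on H_B, subject to w = Σ_{a,x} tr[(ω_x ⊗ F_{a|ω_x})(M*_{a,+} − M*_{a,−})] and Σ_a M*_{a,±} = 1_V ⊗ ρ_±. Then f(w) ≤ N(ρ^{AB}). -/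
/-!
Partially transpose a decomposition `ρ = P - N` with `P^{T_A}, N^{T_A} ≥ 0` and link it with Alice's
POVM: `M*_{a,+} = M_a ⋆ P^{T_A}`, `M*_{a,-} = M_a ⋆ N^{T_A}`, `ρ_+ = tr_A P`, `ρ_- = tr_A N` is a
feasible point of the program defining `f(w)`, with objective value `tr N`. The `M*_{a,±}` are
positive as link products of positive operators, they sum to `1_V ⊗ ρ_±` because `∑ₐ M_a = 1`, and
`tr[(ω ⊗ F)(M_a ⋆ ρ^{T_A})] = tr[F σ_{a|ω}]` reproduces `w`. For `d ≥ 1` the constraint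
`∑ₐ M*_{a,-} = 1_V ⊗ ρ_-` forces `ρ_- ≥ 0`, so the feasible values are bounded below by `0` and the
infimum is a genuine one.
-/

open Matrix ComplexOrder
open scoped Kronecker

namespace Tele

noncomputable def ptrace₁ {V B : Type*} [Fintype V]
    (M : Matrix (V × B) (V × B) ℂ) : Matrix B B ℂ :=
  Matrix.of fun b b' => ∑ v, M (v, b) (v, b')

noncomputable def ptrace₂ {V B : Type*} [Fintype B]
    (M : Matrix (V × B) (V × B) ℂ) : Matrix V V ℂ :=
  Matrix.of fun v v' => ∑ b, M (v, b) (v', b)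

noncomputable def ptraceMid {V A B : Type*} [Fintype A]
    (M : Matrix (V × A × B) (V × A × B) ℂ) : Matrix (V × B) (V × B) ℂ :=
  Matrix.of fun p q => ∑ a, M (p.1, a, p.2) (q.1, a, q.2)

noncomputable def ptraceVA {V A B : Type*} [Fintype V] [Fintype A]
    (M : Matrix (V × A × B) (V × A × B) ℂ) : Matrix B B ℂ :=
  Matrix.of fun b b' => ∑ v, ∑ a, M (v, a, b) (v, a, b')

noncomputable def ptraceV₁A {V V₁ A B : Type*} [Fintype V₁] [Fintype A]
    (M : Matrix (V × V₁ × A × B) (V × V₁ × A × B) ℂ) : Matrix (V × B) (V × B) ℂ :=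
  Matrix.of fun p q => ∑ v₁, ∑ a, M (p.1, v₁, a, p.2) (q.1, v₁, a, q.2)

def ptranspose₁ {V B : Type*} (M : Matrix (V × B) (V × B) ℂ) : Matrix (V × B) (V × B) ℂ :=
  Matrix.of fun p q => M (q.1, p.2) (p.1, q.2)

def ptranspose₂ {V B : Type*} (M : Matrix (V × B) (V × B) ℂ) : Matrix (V × B) (V × B) ℂ :=
  Matrix.of fun p q => M (p.1, q.2) (q.1, p.2)

def Separable {V B : Type*} [Fintype V] [Fintype B]
    (M : Matrix (V × B) (V × B) ℂ) : Prop :=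
  ∃ (n : ℕ) (τ : Fin n → Matrix V V ℂ) (χ : Fin n → Matrix B B ℂ),
    (∀ i, (τ i).PosSemidef) ∧ (∀ i, (χ i).PosSemidef) ∧ M = ∑ i, τ i ⊗ₖ χ i

def IsState {V : Type*} [Fintype V] (ρ : Matrix V V ℂ) : Prop :=
  ρ.PosSemidef ∧ ρ.trace = 1

noncomputable def maxEnt (d : ℕ) : Matrix (Fin d × Fin d) (Fin d × Fin d) ℂ :=
  Matrix.of fun p q => if p.1 = p.2 ∧ q.1 = q.2 then (d : ℂ)⁻¹ else 0

noncomputable def chanOp {V A B : Type*} [Fintype V] [Fintype A] [Fintype B]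
    [DecidableEq V] [DecidableEq B]
    (M : Matrix (V × A) (V × A) ℂ) (ρ : Matrix (A × B) (A × B) ℂ) :
    Matrix (V × B) (V × B) ℂ :=
  ptraceMid ((Matrix.reindex (Equiv.prodAssoc V A B) (Equiv.prodAssoc V A B)
      (M ⊗ₖ (1 : Matrix B B ℂ))) * ((1 : Matrix V V ℂ) ⊗ₖ ρ))

noncomputable def teleA {V A B : Type*} [Fintype V] [Fintype A] [Fintype B] [DecidableEq B]
    (M : Matrix (V × A) (V × A) ℂ) (ρ : Matrix (A × B) (A × B) ℂ) (ω : Matrix V V ℂ) :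
    Matrix B B ℂ :=
  ptraceVA ((Matrix.reindex (Equiv.prodAssoc V A B) (Equiv.prodAssoc V A B)
      (M ⊗ₖ (1 : Matrix B B ℂ))) * (ω ⊗ₖ ρ))

noncomputable def margOp {V A : Type*} [Fintype V] [Fintype A] [DecidableEq V]
    (M : Matrix (V × A) (V × A) ℂ) (ρA : Matrix A A ℂ) : Matrix V V ℂ :=
  ptrace₂ (M * ((1 : Matrix V V ℂ) ⊗ₖ ρA))

noncomputable def piOp {A B : Type*} [Fintype A] [Fintype B] [DecidableEq B]
    (χ : Matrix A A ℂ) (ρ : Matrix (A × B) (A × B) ℂ) : Matrix B B ℂ :=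
  ptrace₁ ((χ ⊗ₖ (1 : Matrix B B ℂ)) * ρ)

def TomoComplete {V X : Type*} [Fintype V] (ω : X → Matrix V V ℂ) : Prop :=
  ∀ H : Matrix V V ℂ, H.IsHermitian → H ∈ Submodule.span ℝ (Set.range ω)

noncomputable def shiftX (d : ℕ) : Matrix (Fin d) (Fin d) ℂ :=
  Matrix.of fun i j => if (i : ℕ) = ((j : ℕ) + 1) % d then 1 else 0

noncomputable def clockZ (d : ℕ) : Matrix (Fin d) (Fin d) ℂ :=
  Matrix.of fun i j =>
    if i = j then Complex.exp (2 * (Real.pi : ℂ) * Complex.I * ((i : ℕ) : ℂ) / (d : ℂ)) else 0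

noncomputable def HW (d : ℕ) (a : Fin d × Fin d) : Matrix (Fin d) (Fin d) ℂ :=
  shiftX d ^ (a.1 : ℕ) * clockZ d ^ (a.2 : ℕ)

noncomputable def bellPOVM (d : ℕ) (a : Fin d × Fin d) :
    Matrix (Fin d × Fin d) (Fin d × Fin d) ℂ :=
  (HW d a ⊗ₖ (1 : Matrix (Fin d) (Fin d) ℂ)) * maxEnt d *
    ((HW d a)ᴴ ⊗ₖ (1 : Matrix (Fin d) (Fin d) ℂ))

noncomputable def negativity {A B : Type*} [Fintype A] [Fintype B]
    (ρ : Matrix (A × B) (A × B) ℂ) : ℝ :=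
  sInf {t : ℝ | ∃ ρp ρm : Matrix (A × B) (A × B) ℂ,
    ρ = ρp - ρm ∧ (ptranspose₁ ρp).PosSemidef ∧ (ptranspose₁ ρm).PosSemidef ∧
    t = (ρm.trace).re}

noncomputable def epsGen {A B : Type*} [Fintype A] [Fintype B]
    (ρ : Matrix (A × B) (A × B) ℂ) : ℝ :=
  sInf {r : ℝ | 0 ≤ r ∧ ∃ ρs : Matrix (A × B) (A × B) ℂ, IsState ρs ∧
    Separable ((((1 + r : ℝ) : ℂ))⁻¹ • (ρ + ((r : ℝ) : ℂ) • ρs))}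

noncomputable def epsSep {A B : Type*} [Fintype A] [Fintype B]
    (ρ : Matrix (A × B) (A × B) ℂ) : ℝ :=
  sInf {r : ℝ | 0 ≤ r ∧ ∃ ρs : Matrix (A × B) (A × B) ℂ, IsState ρs ∧ Separable ρs ∧
    Separable ((((1 + r : ℝ) : ℂ))⁻¹ • (ρ + ((r : ℝ) : ℂ) • ρs))}

noncomputable def epsR {A B : Type*} [Fintype A] [Fintype B] [DecidableEq A] [DecidableEq B]
    (ρ : Matrix (A × B) (A × B) ℂ) : ℝ :=
  sInf {r : ℝ | 0 ≤ r ∧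
    Separable ((((1 + r : ℝ) : ℂ))⁻¹ •
      (ρ + ((r : ℝ) : ℂ) • ((Fintype.card (A × B) : ℂ)⁻¹ • (1 : Matrix (A × B) (A × B) ℂ))))}

noncomputable def epsBSA {A B : Type*} [Fintype A] [Fintype B]
    (ρ : Matrix (A × B) (A × B) ℂ) : ℝ :=
  sInf {p : ℝ | 0 ≤ p ∧ p ≤ 1 ∧ ∃ ρs σS : Matrix (A × B) (A × B) ℂ,
    IsState ρs ∧ IsState σS ∧ Separable σS ∧
    ρ = ((p : ℝ) : ℂ) • ρs + (((1 - p : ℝ)) : ℂ) • σS}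

noncomputable def tauGen {V B X ι : Type*} [Fintype V] [Fintype B] [Fintype ι]
    [DecidableEq V] [DecidableEq B]
    (ω : X → Matrix V V ℂ) (σ : ι → X → Matrix B B ℂ) : ℝ :=
  sInf {r : ℝ | 0 ≤ r ∧ ∃ (m : ℕ) (ρs : Matrix (Fin m × B) (Fin m × B) ℂ)
      (N : ι → Matrix (V × Fin m) (V × Fin m) ℂ) (Ms : ι → Matrix (V × B) (V × B) ℂ),
      IsState ρs ∧ (∀ a, (N a).PosSemidef) ∧ ((∑ a, N a) = 1) ∧
      (∀ a, (Ms a).PosSemidef ∧ Separable (Ms a)) ∧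
      (∀ a x, (((1 + r : ℝ) : ℂ))⁻¹ • (σ a x + ((r : ℝ) : ℂ) • teleA (N a) ρs (ω x)) =
        ptrace₁ (Ms a * (ω x ⊗ₖ (1 : Matrix B B ℂ)))) ∧
      (∀ x, (∑ a, Ms a) = (1 : Matrix V V ℂ) ⊗ₖ
        ((((1 + r : ℝ) : ℂ))⁻¹ •
          ((∑ a, σ a x) + ((r : ℝ) : ℂ) • ∑ a, teleA (N a) ρs (ω x))))}

noncomputable def tauCl {V B X ι : Type*} [Fintype V] [Fintype B] [Fintype ι]
    [DecidableEq V] [DecidableEq B]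
    (ω : X → Matrix V V ℂ) (σ : ι → X → Matrix B B ℂ) : ℝ :=
  sInf {r : ℝ | 0 ≤ r ∧ ∃ (Mb Ms : ι → Matrix (V × B) (V × B) ℂ),
    (∀ a, (Mb a).PosSemidef ∧ Separable (Mb a)) ∧
    (∀ a, (Ms a).PosSemidef ∧ Separable (Ms a)) ∧
    (∀ x, (∑ a, Mb a) = (1 : Matrix V V ℂ) ⊗ₖ
      (∑ a, ptrace₁ (Mb a * (ω x ⊗ₖ (1 : Matrix B B ℂ))))) ∧
    (∀ a x, (((1 + r : ℝ) : ℂ))⁻¹ •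
        (σ a x + ((r : ℝ) : ℂ) • ptrace₁ (Mb a * (ω x ⊗ₖ (1 : Matrix B B ℂ)))) =
      ptrace₁ (Ms a * (ω x ⊗ₖ (1 : Matrix B B ℂ)))) ∧
    (∀ x, (∑ a, Ms a) = (1 : Matrix V V ℂ) ⊗ₖ
      ((((1 + r : ℝ) : ℂ))⁻¹ •
        ((∑ a, σ a x) + ((r : ℝ) : ℂ) •
          ∑ a, ptrace₁ (Mb a * (ω x ⊗ₖ (1 : Matrix B B ℂ))))))}

noncomputable def tauR {V B X ι : Type*} [Fintype V] [Fintype B] [Fintype ι]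
    [DecidableEq V] [DecidableEq B]
    (ω : X → Matrix V V ℂ) (σ : ι → X → Matrix B B ℂ) : ℝ :=
  sInf {r : ℝ | 0 ≤ r ∧ ∃ (p : ι → ℝ) (Ms : ι → Matrix (V × B) (V × B) ℂ),
    (∀ a, 0 ≤ p a) ∧ ((∑ a, p a) = 1) ∧
    (∀ a, (Ms a).PosSemidef ∧ Separable (Ms a)) ∧
    (∀ a x, (((1 + r : ℝ) : ℂ))⁻¹ •
        (σ a x + ((r * p a : ℝ) : ℂ) • ((Fintype.card B : ℂ)⁻¹ • (1 : Matrix B B ℂ))) =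
      ptrace₁ (Ms a * (ω x ⊗ₖ (1 : Matrix B B ℂ)))) ∧
    (∀ x, (∑ a, Ms a) = (1 : Matrix V V ℂ) ⊗ₖ
      ((((1 + r : ℝ) : ℂ))⁻¹ •
        ((∑ a, σ a x) + ((r : ℝ) : ℂ) • ((Fintype.card B : ℂ)⁻¹ • (1 : Matrix B B ℂ)))))}

noncomputable def TW {V B X ι : Type*} [Fintype V] [Fintype B] [Fintype ι]
    [DecidableEq B]
    (ω : X → Matrix V V ℂ) (σ : ι → X → Matrix B B ℂ) : ℝ :=
  sInf {p : ℝ | 0 ≤ p ∧ p ≤ 1 ∧ ∃ (Mt Mb : ι → Matrix (V × B) (V × B) ℂ),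
    (∀ a, (Mb a).PosSemidef ∧ Separable (Mb a)) ∧
    (∀ a, (ptranspose₁ (Mt a)).PosSemidef) ∧
    (∀ x x', (∑ a, ptrace₁ (Mt a * (ω x ⊗ₖ (1 : Matrix B B ℂ)))) =
      ∑ a, ptrace₁ (Mt a * (ω x' ⊗ₖ (1 : Matrix B B ℂ)))) ∧
    (∀ a x, σ a x = ptrace₁
      ((((p : ℝ) : ℂ) • Mt a + (((1 - p : ℝ)) : ℂ) • Mb a) * (ω x ⊗ₖ (1 : Matrix B B ℂ))))}

end Tele

namespace Matrix

lemma IsHermitian.exists_posSemidef_sub {n 𝕜 : Type*} [Fintype n] [RCLike 𝕜] {H : Matrix n n 𝕜}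
    (hH : H.IsHermitian) : ∃ P N : Matrix n n 𝕜, P.PosSemidef ∧ N.PosSemidef ∧ H = P - N := by
  classical
  open scoped MatrixOrder in
  obtain ⟨P, N, hP, hN, rfl⟩ := IsSelfAdjoint.exists_nonneg_sub_nonneg hH
  exact ⟨P, N, hP.posSemidef, hN.posSemidef, rfl⟩

lemma PosSemidef.of_one_kronecker {n m R : Type*} [DecidableEq n] [Nonempty n]
    [CommRing R] [PartialOrder R] [StarRing R] {M : Matrix m m R}
    (h : ((1 : Matrix n n R) ⊗ₖ M).PosSemidef) : M.PosSemidef := by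
  obtain ⟨i⟩ := ‹Nonempty n›
  convert h.submatrix fun j => (i, j)
  ext j k
  simp

end Matrix

namespace Tele

section PartialTraceTranspose

variable {V B : Type*}

lemma ptranspose₁_ptranspose₁ (M : Matrix (V × B) (V × B) ℂ) :
    ptranspose₁ (ptranspose₁ M) = M := rfl

lemma ptranspose₁_sub (M N : Matrix (V × B) (V × B) ℂ) :
    ptranspose₁ (M - N) = ptranspose₁ M - ptranspose₁ N := rfl

lemma isHermitian_ptranspose₁ {M : Matrix (V × B) (V × B) ℂ} (h : M.IsHermitian) :
    (ptranspose₁ M).IsHermitian := by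
  ext p q
  simpa [ptranspose₁, Matrix.conjTranspose_apply] using congr_fun₂ h (q.1, p.2) (p.1, q.2)

lemma ptrace₁_ptranspose₁ [Fintype V] (M : Matrix (V × B) (V × B) ℂ) :
    ptrace₁ (ptranspose₁ M) = ptrace₁ M := rfl

lemma isHermitian_ptrace₁ [Fintype V] {M : Matrix (V × B) (V × B) ℂ} (h : M.IsHermitian) :
    (ptrace₁ M).IsHermitian := by
  ext b b'
  simp only [ptrace₁, Matrix.conjTranspose_apply, Matrix.of_apply, star_sum]
  exact Finset.sum_congr rfl fun v _ => by
    simpa [Matrix.conjTranspose_apply] using congr_fun₂ h (v, b) (v, b')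

lemma trace_ptrace₁ [Fintype V] [Fintype B] (M : Matrix (V × B) (V × B) ℂ) :
    (ptrace₁ M).trace = M.trace := by
  simp only [Matrix.trace, Matrix.diag, ptrace₁, Matrix.of_apply, Fintype.sum_prod_type]
  exact Finset.sum_comm

lemma exists_posSemidef_ptranspose₁_sub [Fintype V] [Fintype B]
    {ρ : Matrix (V × B) (V × B) ℂ} (hρ : ρ.IsHermitian) :
    ∃ ρp ρm : Matrix (V × B) (V × B) ℂ,
      ρ = ρp - ρm ∧ (ptranspose₁ ρp).PosSemidef ∧ (ptranspose₁ ρm).PosSemidef := by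
  obtain ⟨P, N, hP, hN, hPN⟩ := (isHermitian_ptranspose₁ hρ).exists_posSemidef_sub
  exact ⟨ptranspose₁ P, ptranspose₁ N, by rw [← ptranspose₁_sub, ← hPN]; rfl, hP, hN⟩

end PartialTraceTranspose

section LinkProduct

variable {V A B : Type*} [Fintype A]

/-- The link product `M ⋆ σ = tr_A[(M^{T_A} ⊗ 1_B)(1_V ⊗ σ)]`. -/
noncomputable def linkProduct (M : Matrix (V × A) (V × A) ℂ) (σ : Matrix (A × B) (A × B) ℂ) :
    Matrix (V × B) (V × B) ℂ :=
  Matrix.of fun p q => ∑ a, ∑ a', M (p.1, a) (q.1, a') * σ (a, p.2) (a', q.2)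

lemma posSemidef_linkProduct [Fintype V] [Fintype B] {M : Matrix (V × A) (V × A) ℂ}
    {σ : Matrix (A × B) (A × B) ℂ} (hM : M.PosSemidef) (hσ : σ.PosSemidef) :
    (linkProduct M σ).PosSemidef := by
  classical
  -- `E |v b⟩ = ∑ₐ |v a⟩|a b⟩` exhibits `M ⋆ σ` as a compression of `M ⊗ σ`.
  let E : Matrix ((V × A) × (A × B)) (V × B) ℂ := Matrix.of fun r p =>
    if r.1.1 = p.1 ∧ r.1.2 = r.2.1 ∧ r.2.2 = p.2 then 1 else 0
  have hE : linkProduct M σ = Eᴴ * (M ⊗ₖ σ) * E := by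
    ext p q
    simp only [E, linkProduct, of_apply, ite_and, mul_apply, conjTranspose_apply,
      RCLike.star_def, apply_ite (starRingEnd ℂ), map_one, map_zero, kroneckerMap_apply, ite_mul,
      one_mul, zero_mul, mul_ite, mul_one, mul_zero, Fintype.sum_prod_type, Finset.sum_ite_irrel,
      Finset.sum_ite_eq, Finset.sum_ite_eq', Finset.mem_univ, ↓reduceIte, Finset.sum_const_zero]
    exact Finset.sum_comm
  rw [hE]
  exact (hM.kronecker hσ).conjTranspose_mul_mul_same E

lemma one_linkProduct [DecidableEq V] [DecidableEq A] (σ : Matrix (A × B) (A × B) ℂ) :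
    linkProduct (1 : Matrix (V × A) (V × A) ℂ) σ = (1 : Matrix V V ℂ) ⊗ₖ ptrace₁ σ := by
  ext p q
  by_cases h : p.1 = q.1 <;> simp [linkProduct, ptrace₁, Matrix.one_apply, h]

lemma sum_linkProduct {ι : Type*} [Fintype ι] (M : ι → Matrix (V × A) (V × A) ℂ)
    (σ : Matrix (A × B) (A × B) ℂ) :
    ∑ i, linkProduct (M i) σ = linkProduct (∑ i, M i) σ := by
  ext p q
  simp only [Matrix.sum_apply, linkProduct, Matrix.of_apply, Finset.sum_mul]
  rw [Finset.sum_comm]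
  exact Finset.sum_congr rfl fun _ _ => Finset.sum_comm

lemma linkProduct_sub (M : Matrix (V × A) (V × A) ℂ) (σ₁ σ₂ : Matrix (A × B) (A × B) ℂ) :
    linkProduct M (σ₁ - σ₂) = linkProduct M σ₁ - linkProduct M σ₂ := by
  ext p q
  simp [linkProduct, mul_sub, Finset.sum_sub_distrib]

lemma teleA_apply [Fintype V] [Fintype B] [DecidableEq B] (M : Matrix (V × A) (V × A) ℂ)
    (ρ : Matrix (A × B) (A × B) ℂ) (ω : Matrix V V ℂ) (b b' : B) :
    teleA M ρ ω b b' = ∑ v, ∑ a, ∑ v', ∑ a', M (v, a) (v', a') * ω v' v * ρ (a', b) (a, b') := by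
  simp [teleA, ptraceVA, Matrix.mul_apply, Fintype.sum_prod_type, Matrix.one_apply, mul_assoc]

lemma trace_kronecker_mul_linkProduct_ptranspose₁ [Fintype V] [Fintype B] [DecidableEq B]
    (ω : Matrix V V ℂ) (F : Matrix B B ℂ) (M : Matrix (V × A) (V × A) ℂ)
    (ρ : Matrix (A × B) (A × B) ℂ) :
    ((ω ⊗ₖ F) * linkProduct M (ptranspose₁ ρ)).trace = (F * teleA M ρ ω).trace := by
  simp only [Matrix.trace, Matrix.diag, Matrix.mul_apply, teleA_apply, linkProduct, ptranspose₁,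
    Matrix.of_apply, kroneckerMap_apply, Fintype.sum_prod_type, Finset.mul_sum]
  rw [Finset.sum_comm]
  refine Finset.sum_congr rfl fun b _ => ?_
  rw [Finset.sum_congr rfl fun v _ => Finset.sum_comm, Finset.sum_comm]
  refine Finset.sum_congr rfl fun b' _ => ?_
  rw [Finset.sum_comm]
  refine Finset.sum_congr rfl fun v' _ => ?_
  rw [Finset.sum_comm]
  exact Finset.sum_congr rfl fun a _ => Finset.sum_congr rfl fun v _ =>
    Finset.sum_congr rfl fun a' _ => by ring

end LinkProduct

theorem negativity_from_witness_general {A B ι X : Type*}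
    [Fintype A] [Fintype B] [Fintype ι] [Fintype X] [DecidableEq A] [DecidableEq B]
    (d : ℕ) (hd : 1 ≤ d)
    (ρ : Matrix (A × B) (A × B) ℂ) (hρ : IsState ρ)
    (M : ι → Matrix (Fin d × A) (Fin d × A) ℂ)
    (hM : ∀ a, (M a).PosSemidef) (hMsum : (∑ a, M a) = 1)
    (ω : X → Matrix (Fin d) (Fin d) ℂ)
    (F : ι → X → Matrix B B ℂ)
    (w : ℝ)
    (hw : w = (∑ a, ∑ x, (F a x * teleA (M a) ρ (ω x)).trace).re) :
    sInf {t : ℝ | ∃ (Mp Mm : ι → Matrix (Fin d × B) (Fin d × B) ℂ) (ρp ρm : Matrix B B ℂ),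
        (∀ a, (Mp a).PosSemidef) ∧ (∀ a, (Mm a).PosSemidef) ∧
        ρp.IsHermitian ∧ ρm.IsHermitian ∧
        w = (∑ a, ∑ x, ((ω x ⊗ₖ F a x) * (Mp a - Mm a)).trace).re ∧
        (∑ a, Mp a) = (1 : Matrix (Fin d) (Fin d) ℂ) ⊗ₖ ρp ∧
        (∑ a, Mm a) = (1 : Matrix (Fin d) (Fin d) ℂ) ⊗ₖ ρm ∧
        t = (ρm.trace).re} ≤ negativity ρ := by
  have : Nonempty (Fin d) := ⟨⟨0, hd⟩⟩
  obtain ⟨P, N, hPN, hP, hN⟩ := exists_posSemidef_ptranspose₁_sub hρ.1.1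
  refine le_csInf ⟨_, P, N, hPN, hP, hN, rfl⟩ ?_
  rintro _ ⟨ρp, ρm, rfl, hp, hm, rfl⟩
  refine csInf_le ⟨0, ?_⟩ ⟨fun a => linkProduct (M a) (ptranspose₁ ρp),
    fun a => linkProduct (M a) (ptranspose₁ ρm), ptrace₁ ρp, ptrace₁ ρm,
    fun a => posSemidef_linkProduct (hM a) hp, fun a => posSemidef_linkProduct (hM a) hm,
    ptrace₁_ptranspose₁ ρp ▸ isHermitian_ptrace₁ hp.isHermitian,
    ptrace₁_ptranspose₁ ρm ▸ isHermitian_ptrace₁ hm.isHermitian, ?_,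
    by rw [sum_linkProduct, hMsum, one_linkProduct, ptrace₁_ptranspose₁],
    by rw [sum_linkProduct, hMsum, one_linkProduct, ptrace₁_ptranspose₁],
    by rw [trace_ptrace₁]⟩
  · rintro _ ⟨Mp, Mm, ρp', ρm', -, hMm, -, -, -, -, hsum, rfl⟩
    have hρm : ρm'.PosSemidef :=
      (hsum ▸ Matrix.posSemidef_sum Finset.univ fun a _ => hMm a).of_one_kronecker
    exact (Complex.nonneg_iff.mp hρm.trace_nonneg).1
  · simp_rw [hw, ← linkProduct_sub, ← ptranspose₁_sub, trace_kronecker_mul_linkProduct_ptranspose₁]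

/-- the negativity bound f(w) from the violation w of a nonclassical
teleportation witness lower bounds the entanglement negativity of the shared state. -/
theorem negativity_from_witness {A B ι X : Type*}
    [Fintype A] [Fintype B] [Fintype ι] [Fintype X] [DecidableEq A] [DecidableEq B]
    (d : ℕ) (hd : 1 ≤ d)
    (ρ : Matrix (A × B) (A × B) ℂ) (hρ : IsState ρ)
    (M : ι → Matrix (Fin d × A) (Fin d × A) ℂ)
    (hM : ∀ a, (M a).PosSemidef) (hMsum : (∑ a, M a) = 1)
    (ω : X → Matrix (Fin d) (Fin d) ℂ) (hω : ∀ x, IsState (ω x))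
    (F : ι → X → Matrix B B ℂ) (hF : ∀ a x, (F a x).IsHermitian)
    (w : ℝ)
    (hw : w = (∑ a, ∑ x, (F a x * teleA (M a) ρ (ω x)).trace).re) :
    sInf {t : ℝ | ∃ (Mp Mm : ι → Matrix (Fin d × B) (Fin d × B) ℂ) (ρp ρm : Matrix B B ℂ),
        (∀ a, (Mp a).PosSemidef) ∧ (∀ a, (Mm a).PosSemidef) ∧
        ρp.IsHermitian ∧ ρm.IsHermitian ∧
        w = (∑ a, ∑ x, ((ω x ⊗ₖ F a x) * (Mp a - Mm a)).trace).re ∧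
        (∑ a, Mp a) = (1 : Matrix (Fin d) (Fin d) ℂ) ⊗ₖ ρp ∧
        (∑ a, Mm a) = (1 : Matrix (Fin d) (Fin d) ℂ) ⊗ₖ ρm ∧
        t = (ρm.trace).re} ≤ negativity ρ :=
  negativity_from_witness_general d hd ρ hρ M hM hMsum ω F w hw

end Tele
end

section
/- For any teleportation assemblage {σ_{a|ω_x}} arising from a shared state ρ^{AB}, a POVM {M_a^{VA}} and input states {ω_x}, the teleportation weight is bounded by the best separable approximation of the shared state: TW({σ_{a|ω_x}}) ≤ ε_BSA(ρ^{AB}). -/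
/-!
Decompose `ρ = p • ρs + (1 - p) • σS` with `σS` separable and let Alice's effect `M a` act on
each part through `chanOp (M a) τ = tr_A[(M a ⊗ 1)(1 ⊗ τ)]`, which is linear in `τ` and satisfies
`teleA (M a) τ ω = tr_V[chanOp (M a) τ (ω ⊗ 1)]`. On product operators
`chanOp (M a) (τ ⊗ χ) = margOp (M a) τ ⊗ χ`, so `chanOp (M a) σS` is separable; the partial
transpose of `chanOp (M a) ρs` is a completely positive image of `ρs`, hence positive; and
`∑ a, chanOp (M a) ρs = 1 ⊗ tr_A ρs`, whose pairing with `ω x ⊗ 1` does not depend on `x`.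
So every `p` feasible for `epsBSA ρ` is feasible for `TW`.
-/

open Matrix ComplexOrder
open scoped Kronecker

namespace Tele

section States

variable {V A B : Type*} [Fintype V] [Fintype A] [Fintype B]

lemma exists_eq_conjTranspose_mul_self {M : Matrix V V ℂ} (hM : M.PosSemidef) :
    ∃ L : Matrix V V ℂ, M = Lᴴ * L := by
  classical
  open scoped MatrixOrder Matrix.Norms.L2Operator in
  exact CStarAlgebra.nonneg_iff_eq_star_mul_self.mp hM.nonneg

lemma IsState.nonempty {ρ : Matrix V V ℂ} (hρ : IsState ρ) : Nonempty V := by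
  by_contra h
  have htr := hρ.2
  simp [Matrix.trace, not_nonempty_iff.mp h] at htr

lemma isState_uniform [DecidableEq V] [Nonempty V] :
    IsState ((Fintype.card V : ℂ)⁻¹ • (1 : Matrix V V ℂ)) :=
  ⟨PosSemidef.one.smul (by positivity), by simp [Matrix.trace_smul]⟩

lemma IsState.kronecker {τ : Matrix A A ℂ} {χ : Matrix B B ℂ} (hτ : IsState τ)
    (hχ : IsState χ) : IsState (τ ⊗ₖ χ) :=
  ⟨hτ.1.kronecker hχ.1, by rw [trace_kronecker, hτ.2, hχ.2, one_mul]⟩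

lemma separable_kronecker {τ : Matrix A A ℂ} {χ : Matrix B B ℂ}
    (hτ : τ.PosSemidef) (hχ : χ.PosSemidef) : Separable (τ ⊗ₖ χ) :=
  ⟨1, fun _ => τ, fun _ => χ, fun _ => hτ, fun _ => hχ, by rw [Fin.sum_univ_one]⟩

lemma Separable.posSemidef {X : Matrix (A × B) (A × B) ℂ} (hX : Separable X) :
    X.PosSemidef := by
  obtain ⟨n, τ, χ, hτ, hχ, rfl⟩ := hX
  exact posSemidef_sum _ fun i _ => (hτ i).kronecker (hχ i)

lemma exists_separable_state [DecidableEq A] [DecidableEq B] [Nonempty A] [Nonempty B] :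
    ∃ σ : Matrix (A × B) (A × B) ℂ, IsState σ ∧ Separable σ :=
  ⟨_, isState_uniform.kronecker isState_uniform,
    separable_kronecker isState_uniform.1 isState_uniform.1⟩

end States

section PartialTrace

variable {V B : Type*} [Fintype V]

lemma ptrace₁_sum {ι : Type*} (s : Finset ι) (N : ι → Matrix (V × B) (V × B) ℂ) :
    ptrace₁ (∑ i ∈ s, N i) = ∑ i ∈ s, ptrace₁ (N i) := by
  ext b b'
  simp only [ptrace₁, Matrix.sum_apply, Matrix.of_apply]
  exact Finset.sum_comm

lemma ptrace₁_kronecker (τ : Matrix V V ℂ) (χ : Matrix B B ℂ) :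
    ptrace₁ (τ ⊗ₖ χ) = τ.trace • χ := by
  ext b b'
  simp [ptrace₁, Matrix.trace, Finset.sum_mul]

lemma ptrace₁_mul_kronecker_one_apply [Fintype B] [DecidableEq B]
    (N : Matrix (V × B) (V × B) ℂ) (ω : Matrix V V ℂ) (b b' : B) :
    ptrace₁ (N * (ω ⊗ₖ (1 : Matrix B B ℂ))) b b' = ∑ v, ∑ v', N (v, b) (v', b') * ω v' v := by
  simp [ptrace₁, Matrix.mul_apply, Matrix.one_apply, Fintype.sum_prod_type]

end PartialTrace

section ChanOp

variable {V A B : Type*} [Fintype V] [Fintype A] [Fintype B] [DecidableEq V] [DecidableEq B]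

lemma chanOp_apply (M : Matrix (V × A) (V × A) ℂ) (ρ : Matrix (A × B) (A × B) ℂ)
    (v v' : V) (b b' : B) :
    chanOp M ρ (v, b) (v', b') = ∑ a, ∑ c, M (v, a) (v', c) * ρ (c, b) (a, b') := by
  simp [chanOp, ptraceMid, Matrix.mul_apply, Equiv.prodAssoc, Matrix.one_apply,
    Fintype.sum_prod_type]

lemma margOp_apply (M : Matrix (V × A) (V × A) ℂ) (τ : Matrix A A ℂ) (v v' : V) :
    margOp M τ v v' = ∑ a, ∑ c, M (v, a) (v', c) * τ c a := by
  simp [margOp, ptrace₂, Matrix.mul_apply, Matrix.one_apply, Fintype.sum_prod_type]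

lemma teleA_eq_ptrace₁_chanOp (M : Matrix (V × A) (V × A) ℂ) (ρ : Matrix (A × B) (A × B) ℂ)
    (ω : Matrix V V ℂ) :
    teleA M ρ ω = ptrace₁ (chanOp M ρ * (ω ⊗ₖ (1 : Matrix B B ℂ))) := by
  ext b b'
  simp only [ptrace₁_mul_kronecker_one_apply, chanOp_apply, Finset.sum_mul]
  simp only [teleA, ptraceVA, Equiv.prodAssoc, reindex_apply, Equiv.symm_mk, Equiv.coe_fn_mk,
    Matrix.mul_apply, submatrix_apply, kroneckerMap_apply, Matrix.one_apply, mul_ite, mul_one,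
    mul_zero, ite_mul, zero_mul, Fintype.sum_prod_type, Finset.sum_ite_eq, Finset.mem_univ,
    ↓reduceIte, of_apply]
  refine Finset.sum_congr rfl fun v _ => Finset.sum_comm.trans ?_
  simp only [mul_comm (ω _ _), mul_assoc]

noncomputable def chanOpBilin :
    Matrix (V × A) (V × A) ℂ →ₗ[ℂ] Matrix (A × B) (A × B) ℂ →ₗ[ℂ] Matrix (V × B) (V × B) ℂ :=
  LinearMap.mk₂ ℂ chanOp
    (fun _ _ _ => by ext ⟨⟩ ⟨⟩; simp [chanOp_apply, add_mul, Finset.sum_add_distrib])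
    (fun _ _ _ => by ext ⟨⟩ ⟨⟩; simp [chanOp_apply, Finset.mul_sum, mul_assoc])
    (fun _ _ _ => by ext ⟨⟩ ⟨⟩; simp [chanOp_apply, mul_add, Finset.sum_add_distrib])
    (fun _ _ _ => by ext ⟨⟩ ⟨⟩; simp [chanOp_apply, Finset.mul_sum, mul_left_comm])

lemma chanOpBilin_apply (M : Matrix (V × A) (V × A) ℂ) (ρ : Matrix (A × B) (A × B) ℂ) :
    chanOpBilin M ρ = chanOp M ρ := rfl

lemma chanOp_sum_left {ι : Type*} (s : Finset ι) (M : ι → Matrix (V × A) (V × A) ℂ)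
    (ρ : Matrix (A × B) (A × B) ℂ) :
    chanOp (∑ i ∈ s, M i) ρ = ∑ i ∈ s, chanOp (M i) ρ := by
  simp only [← chanOpBilin_apply, map_sum, LinearMap.sum_apply]

lemma chanOp_sum_right {ι : Type*} (s : Finset ι) (M : Matrix (V × A) (V × A) ℂ)
    (ρ : ι → Matrix (A × B) (A × B) ℂ) :
    chanOp M (∑ i ∈ s, ρ i) = ∑ i ∈ s, chanOp M (ρ i) := by
  simp only [← chanOpBilin_apply, map_sum]

lemma chanOp_add_smul_right (M : Matrix (V × A) (V × A) ℂ) (c₁ c₂ : ℂ)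
    (ρ₁ ρ₂ : Matrix (A × B) (A × B) ℂ) :
    chanOp M (c₁ • ρ₁ + c₂ • ρ₂) = c₁ • chanOp M ρ₁ + c₂ • chanOp M ρ₂ := by
  simp only [← chanOpBilin_apply, map_add, map_smul]

lemma chanOp_one [DecidableEq A] (ρ : Matrix (A × B) (A × B) ℂ) :
    chanOp (1 : Matrix (V × A) (V × A) ℂ) ρ = (1 : Matrix V V ℂ) ⊗ₖ ptrace₁ ρ := by
  ext ⟨v, b⟩ ⟨v', b'⟩
  simp [chanOp_apply, Matrix.one_apply, ptrace₁, ite_and, Finset.mul_sum]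

lemma sum_ptrace₁_chanOp_mul {ι : Type*} [Fintype ι] [DecidableEq A]
    {M : ι → Matrix (V × A) (V × A) ℂ} (hM : ∑ a, M a = 1) (ρ : Matrix (A × B) (A × B) ℂ)
    {ω : Matrix V V ℂ} (hω : ω.trace = 1) :
    ∑ a, ptrace₁ (chanOp (M a) ρ * (ω ⊗ₖ (1 : Matrix B B ℂ))) = ptrace₁ ρ := by
  rw [← ptrace₁_sum, ← Finset.sum_mul, ← chanOp_sum_left, hM, chanOp_one, ← mul_kronecker_mul,
    one_mul, mul_one, ptrace₁_kronecker, hω, one_smul]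

lemma chanOp_kronecker (M : Matrix (V × A) (V × A) ℂ) (τ : Matrix A A ℂ) (χ : Matrix B B ℂ) :
    chanOp M (τ ⊗ₖ χ) = margOp M τ ⊗ₖ χ := by
  ext ⟨v, b⟩ ⟨v', b'⟩
  simp only [chanOp_apply, margOp_apply, kroneckerMap_apply, Finset.sum_mul, mul_assoc]

lemma margOp_posSemidef {M : Matrix (V × A) (V × A) ℂ} {τ : Matrix A A ℂ}
    (hM : M.PosSemidef) (hτ : τ.PosSemidef) : (margOp M τ).PosSemidef := by
  obtain ⟨S, rfl⟩ := exists_eq_conjTranspose_mul_self hτ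
  let K : A → Matrix (V × A) V ℂ := fun k => of fun p v => if p.1 = v then star (S k p.2) else 0
  suffices margOp M (Sᴴ * S) = ∑ k, (K k)ᴴ * M * K k from
    this ▸ posSemidef_sum _ fun k _ => hM.conjTranspose_mul_mul_same (K k)
  ext v v'
  simp only [margOp_apply, Matrix.mul_apply, conjTranspose_apply, RCLike.star_def,
    Finset.mul_sum, Matrix.sum_apply, of_apply, apply_ite (starRingEnd ℂ),
    RingHomCompTriple.comp_apply, RingHom.id_apply, map_zero, ite_mul, zero_mul,
    Fintype.sum_prod_type, Finset.sum_ite_irrel, Finset.sum_const_zero, Finset.sum_ite_eq',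
    Finset.mem_univ, ↓reduceIte, mul_ite, Finset.sum_mul, mul_zero, K]
  rw [Finset.sum_comm_cycle]
  exact Finset.sum_congr rfl fun _ _ => Finset.sum_comm.trans <|
    Finset.sum_congr rfl fun _ _ => Finset.sum_congr rfl fun _ _ => by ring

lemma separable_chanOp {M : Matrix (V × A) (V × A) ℂ} (hM : M.PosSemidef)
    {σ : Matrix (A × B) (A × B) ℂ} (hσ : Separable σ) : Separable (chanOp M σ) := by
  obtain ⟨n, τ, χ, hτ, hχ, rfl⟩ := hσ
  refine ⟨n, fun i => margOp M (τ i), χ, fun i => margOp_posSemidef hM (hτ i), hχ, ?_⟩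
  simp only [chanOp_sum_right, chanOp_kronecker]

lemma ptranspose₁_chanOp_posSemidef {M : Matrix (V × A) (V × A) ℂ}
    {ρ : Matrix (A × B) (A × B) ℂ} (hM : M.PosSemidef) (hρ : ρ.PosSemidef) :
    (ptranspose₁ (chanOp M ρ)).PosSemidef := by
  obtain ⟨L, rfl⟩ := exists_eq_conjTranspose_mul_self hM
  -- Kraus operators read off from the Gram factor `L` of `M`.
  let K : V × A → Matrix (A × B) (V × B) ℂ := fun m =>
    of fun p q => if p.2 = q.2 then star (L m (q.1, p.1)) else 0
  suffices ptranspose₁ (chanOp (Lᴴ * L) ρ) = ∑ m, (K m)ᴴ * ρ * K m from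
    this ▸ posSemidef_sum _ fun m _ => hρ.conjTranspose_mul_mul_same (K m)
  ext ⟨v, b⟩ ⟨v', b'⟩
  simp only [ptranspose₁, chanOp_apply, Matrix.mul_apply, conjTranspose_apply, RCLike.star_def,
    Fintype.sum_prod_type, Finset.sum_mul, of_apply, Matrix.sum_apply,
    apply_ite (starRingEnd ℂ), RingHomCompTriple.comp_apply, RingHom.id_apply, map_zero, ite_mul,
    zero_mul, Finset.sum_ite_eq', Finset.mem_univ, ↓reduceIte, mul_ite, mul_zero, K]
  rw [Finset.sum_comm_cycle]
  refine Finset.sum_congr rfl fun _ _ => ?_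
  rw [Finset.sum_comm_cycle]
  exact Finset.sum_congr rfl fun _ _ => Finset.sum_congr rfl fun _ _ =>
    Finset.sum_congr rfl fun _ _ => by ring

end ChanOp

theorem TW_le_epsBSA_general {A B ι X : Type*}
    [Fintype A] [Fintype B] [Fintype ι] [DecidableEq A] [DecidableEq B]
    (d : ℕ)
    (ρ : Matrix (A × B) (A × B) ℂ) (hρ : IsState ρ)
    (M : ι → Matrix (Fin d × A) (Fin d × A) ℂ)
    (hM : ∀ a, (M a).PosSemidef) (hMsum : (∑ a, M a) = 1)
    (ω : X → Matrix (Fin d) (Fin d) ℂ) (hω : ∀ x, IsState (ω x)) :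
    TW ω (fun a x => teleA (M a) ρ (ω x)) ≤ epsBSA ρ := by
  obtain ⟨_, _⟩ := nonempty_prod.mp hρ.nonempty
  obtain ⟨σ₀, hσ₀, hσ₀_sep⟩ := exists_separable_state (A := A) (B := B)
  refine csInf_le_csInf ⟨0, fun _ hp => hp.1⟩
    ⟨1, zero_le_one, le_rfl, ρ, σ₀, hρ, hσ₀, hσ₀_sep, by simp⟩ ?_
  rintro p ⟨hp0, hp1, ρs, σS, hρs, -, hσS_sep, rfl⟩
  refine ⟨hp0, hp1, fun a => chanOp (M a) ρs, fun a => chanOp (M a) σS,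
    fun a => ⟨(separable_chanOp (hM a) hσS_sep).posSemidef, separable_chanOp (hM a) hσS_sep⟩,
    fun a => ptranspose₁_chanOp_posSemidef (hM a) hρs.1, fun x x' => ?_, fun a x => ?_⟩
  · rw [sum_ptrace₁_chanOp_mul hMsum _ (hω x).2, sum_ptrace₁_chanOp_mul hMsum _ (hω x').2]
  · dsimp only
    rw [teleA_eq_ptrace₁_chanOp, chanOp_add_smul_right]

/-- TW({σ_{a|ω_x}}) ≤ ε_BSA(ρ^{AB}). -/
theorem TW_le_epsBSA {A B ι X : Type*}
    [Fintype A] [Fintype B] [Fintype ι] [DecidableEq A] [DecidableEq B]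
    (d : ℕ) (hd : 1 ≤ d)
    (ρ : Matrix (A × B) (A × B) ℂ) (hρ : IsState ρ)
    (M : ι → Matrix (Fin d × A) (Fin d × A) ℂ)
    (hM : ∀ a, (M a).PosSemidef) (hMsum : (∑ a, M a) = 1)
    (ω : X → Matrix (Fin d) (Fin d) ℂ) (hω : ∀ x, IsState (ω x)) :
    TW ω (fun a x => teleA (M a) ρ (ω x)) ≤ epsBSA ρ :=
  TW_le_epsBSA_general d ρ hρ M hM hMsum ω hω

end Tele
end
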